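/- Let S be a nice instance and π a bound-achieving permutation of S. Then for every i ∈ [n]: π(i) is positive if and only if i ≡ 0 or 1 (mod 3); π(i) is negative if and only if i ≡ 2 (mod 3); and if i ≡ 0 (mod 3), then P_i^π = 0. -/
import Mathlib

noncomputable def sgn3 (x : ℝ) : ℤ := if 0 < x then 1 else if x < 0 then -1 else 0
noncomputable def ind3 (x : ℝ) : ℤ := if 0 < x then 1 else if x < 0 then -2 else 0

lemma sgn3_pos {x : ℝ} (h : 0 < x) : sgn3 x = 1 := if_pos h
lemma sgn3_neg {x : ℝ} (h : x < 0) : sgn3 x = -1 := by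
  unfold sgn3; rw [if_neg (by linarith), if_pos h]
lemma sgn3_zero : sgn3 (0:ℝ) = 0 := by unfold sgn3; norm_num
lemma ind3_pos {x : ℝ} (h : 0 < x) : ind3 x = 1 := if_pos h
lemma ind3_neg {x : ℝ} (h : x < 0) : ind3 x = -2 := by
  unfold ind3; rw [if_neg (by linarith), if_pos h]
lemma ind3_split (x : ℝ) :
    ind3 x = (if 0 < x then (1:ℤ) else 0) + (-2) * (if x < 0 then 1 else 0) := by
  unfold ind3
  rcases lt_trichotomy x 0 with h|h|h
  · rw [if_neg (by linarith), if_pos h, if_neg (by linarith), if_pos h]; ring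
  · simp [h]
  · rw [if_pos h, if_pos h, if_neg (by linarith)]; ring

lemma mul_nonpos_of_abs_eq {a b : ℝ} (h : |b - a| = |a| + |b|) : a * b ≤ 0 := by
  rcases abs_cases (b - a) with ⟨e,_⟩|⟨e,_⟩ <;>
    rcases abs_cases a with ⟨e1,s1⟩|⟨e1,s1⟩ <;>
    rcases abs_cases b with ⟨e2,s2⟩|⟨e2,s2⟩ <;>
    nlinarith [h]

/-- For a nice instance and a bound-achieving permutation `π`
(positions `i` here 1-based, the element at position `i` being `π (i-1)`):
`π(i)` is positive iff `i ≡ 0` or `1 (mod 3)`, negative iff `i ≡ 2 (mod 3)`, and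
if `i ≡ 0 (mod 3)` then the `i`-th prefix sum is zero. -/
theorem stmt_6 (n : ℕ) (s π : ℕ → ℝ)
    (hperm : Multiset.map π (Multiset.range n) = Multiset.map s (Multiset.range n))
    (hsum : ∑ i ∈ Finset.range n, s i = 0)
    (hmod : n % 3 = 0)
    (hnz : ∀ i < n, s i ≠ 0)
    (hposcard : 3 * ((Finset.range n).filter (fun i => 0 < s i)).card = 2 * n)
    (hnegcard : 3 * ((Finset.range n).filter (fun i => s i < 0)).card = n)
    (hopt : ∑ i ∈ Finset.range n, |∑ j ∈ Finset.range (i + 1), π j| =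
      (∑ i ∈ Finset.range n, |s i|) / 2) :
    ∀ i, 1 ≤ i → i ≤ n →
      ((0 < π (i - 1) ↔ (i % 3 = 0 ∨ i % 3 = 1)) ∧
        (π (i - 1) < 0 ↔ i % 3 = 2) ∧
        (i % 3 = 0 → ∑ j ∈ Finset.range i, π j = 0)) := by
  classical
  -- transfer of sums along the permutation, real version and integer version
  have keyR : ∀ g : ℝ → ℝ,
      ∑ i ∈ Finset.range n, g (π i) = ∑ i ∈ Finset.range n, g (s i) := by
    intro g
    have h := congrArg (fun m => (Multiset.map g m).sum) hperm
    simp only [Multiset.map_map] at h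
    exact h
  have keyZ : ∀ g : ℝ → ℤ,
      ∑ i ∈ Finset.range n, g (π i) = ∑ i ∈ Finset.range n, g (s i) := by
    intro g
    have h := congrArg (fun m => (Multiset.map g m).sum) hperm
    simp only [Multiset.map_map] at h
    exact h
  have hπnz : ∀ i < n, π i ≠ 0 := by
    intro i hi
    have hm : π i ∈ Multiset.map π (Multiset.range n) :=
      Multiset.mem_map_of_mem _ (Multiset.mem_range.mpr hi)
    rw [hperm] at hm
    obtain ⟨j, hj, hji⟩ := Multiset.mem_map.mp hm
    rw [← hji]; exact hnz j (Multiset.mem_range.mp hj)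
  set P : ℕ → ℝ := fun i => ∑ j ∈ Finset.range i, π j with hPdef
  have hP0 : P 0 = 0 := by simp [hPdef]
  have hPsucc : ∀ i, P (i + 1) = P i + π i := by
    intro i; simp only [hPdef]; exact Finset.sum_range_succ π i
  have hPn : P n = 0 := by
    have h := keyR id
    simp only [id] at h
    simp only [hPdef]; rw [h, hsum]
  have habs : ∑ i ∈ Finset.range n, |π i| = ∑ i ∈ Finset.range n, |s i| :=
    keyR (fun x => |x|)
  have hopt' : ∑ i ∈ Finset.range n, |P (i + 1)| = (∑ i ∈ Finset.range n, |s i|) / 2 := by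
    simp only [hPdef]; exact hopt
  have hshift : ∑ i ∈ Finset.range n, |P i| = ∑ i ∈ Finset.range n, |P (i + 1)| := by
    have h1 := Finset.sum_range_succ (fun i => |P i|) n
    have h2 := Finset.sum_range_succ' (fun i => |P i|) n
    rw [h1] at h2
    simp only [hP0, hPn, abs_zero] at h2
    linarith
  have hle : ∀ i ∈ Finset.range n, |π i| ≤ |P i| + |P (i + 1)| := by
    intro i _
    have hπi : π i = P (i + 1) - P i := by rw [hPsucc]; ring
    rw [hπi]
    calc |P (i + 1) - P i| ≤ |P (i + 1)| + |P i| := abs_sub _ _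
      _ = |P i| + |P (i + 1)| := by ring
  have hsums : ∑ i ∈ Finset.range n, |π i| = ∑ i ∈ Finset.range n, (|P i| + |P (i + 1)|) := by
    rw [Finset.sum_add_distrib]
    linarith
  have heach : ∀ i ∈ Finset.range n, |π i| = |P i| + |P (i + 1)| :=
    (Finset.sum_eq_sum_iff_of_le hle).mp hsums
  have hopp : ∀ i < n, P i * P (i + 1) ≤ 0 := by
    intro i hi
    have h := heach i (Finset.mem_range.mpr hi)
    have hπi : π i = P (i + 1) - P i := by rw [hPsucc]; ring
    rw [hπi] at h
    exact mul_nonpos_of_abs_eq h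
  -- the potential function
  set J : ℕ → ℤ := fun i => (∑ j ∈ Finset.range i, ind3 (π j)) - sgn3 (P i) with hJdef
  have hJ0 : J 0 = 0 := by simp [hJdef, hP0, sgn3_zero]
  have hJn : J n = 0 := by
    have hcnt : ∑ j ∈ Finset.range n, ind3 (s j) =
        (((Finset.range n).filter (fun i => 0 < s i)).card : ℤ) -
          2 * (((Finset.range n).filter (fun i => s i < 0)).card : ℤ) := by
      simp only [ind3_split]
      rw [Finset.sum_add_distrib, Finset.sum_boole, ← Finset.mul_sum, Finset.sum_boole]
      ring
    have h := keyZ ind3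
    rw [hcnt] at h
    have : ((Finset.range n).filter (fun i => 0 < s i)).card =
        2 * ((Finset.range n).filter (fun i => s i < 0)).card := by omega
    simp only [hJdef, hPn, sgn3_zero, h, this]
    push_cast
    ring
  have hstep : ∀ i < n, J (i + 1) ≤ J i ∧ (J (i + 1) = J i →
      ((P i = 0 → 0 < P (i + 1)) ∧ (0 < P i → P (i + 1) < 0) ∧ (P i < 0 → P (i + 1) = 0))) := by
    intro i hi
    have hJs : J (i + 1) = J i + sgn3 (P i) + ind3 (π i) - sgn3 (P (i + 1)) := by
      simp only [hJdef, Finset.sum_range_succ]; ring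
    have hπi : π i = P (i + 1) - P i := by rw [hPsucc]; ring
    have hnz' := hπnz i hi
    have hopp' := hopp i hi
    rcases lt_trichotomy (P i) 0 with h1|h1|h1
    · -- P i < 0 : next is ≥ 0, π i > 0
      have h2 : 0 ≤ P (i + 1) := by nlinarith
      have hp : 0 < π i := by rw [hπi]; linarith
      rw [sgn3_neg h1, ind3_pos hp] at hJs
      rcases eq_or_lt_of_le h2 with h2'|h2'
      · rw [← h2', sgn3_zero] at hJs
        constructor
        · omega
        · intro _
          exact ⟨fun h => absurd h (by linarith), fun h => absurd h (by linarith),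
            fun _ => h2'.symm⟩
      · rw [sgn3_pos h2'] at hJs
        constructor
        · omega
        · intro hJeq; omega
    · -- P i = 0
      rw [h1, sgn3_zero] at hJs
      have hπne : π i ≠ 0 := hnz'
      rcases lt_trichotomy (π i) 0 with hp|hp|hp
      · have h2 : P (i + 1) < 0 := by rw [hPsucc, h1]; linarith
        rw [ind3_neg hp, sgn3_neg h2] at hJs
        constructor
        · omega
        · intro hJeq; omega
      · exact absurd hp hπne
      · have h2 : 0 < P (i + 1) := by rw [hPsucc, h1]; linarith
        rw [ind3_pos hp, sgn3_pos h2] at hJs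
        constructor
        · omega
        · intro _
          exact ⟨fun _ => h2, fun h => absurd h1 (by linarith), fun h => absurd h1 (by linarith)⟩
    · -- P i > 0 : next is ≤ 0, π i < 0
      have h2 : P (i + 1) ≤ 0 := by nlinarith
      have hp : π i < 0 := by rw [hπi]; linarith
      rw [sgn3_pos h1, ind3_neg hp] at hJs
      rcases eq_or_lt_of_le h2 with h2'|h2'
      · rw [h2', sgn3_zero] at hJs
        constructor
        · omega
        · intro hJeq; omega
      · rw [sgn3_neg h2'] at hJs
        constructor
        · omega
        · intro _
          exact ⟨fun h => absurd h (by linarith), fun _ => h2',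
            fun h => absurd h (by linarith)⟩
  -- J is zero everywhere
  have hmono : ∀ i j, i ≤ j → j ≤ n → J j ≤ J i := by
    intro i j hij hjn
    induction j with
    | zero => exact le_of_eq (by rw [Nat.le_zero.mp hij])
    | succ k ih =>
      rcases Nat.eq_or_lt_of_le hij with h|h
      · rw [h]
      · have hk : i ≤ k := by omega
        have := (hstep k (by omega)).1
        have := ih hk (by omega)
        omega
  have hJzero : ∀ i ≤ n, J i = 0 := by
    intro i hin
    have h1 := hmono 0 i (Nat.zero_le _) hin
    have h2 := hmono i n hin le_rfl
    omega
  -- the sign pattern of P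
  have hpat : ∀ i ≤ n, (i % 3 = 0 → P i = 0) ∧ (i % 3 = 1 → 0 < P i) ∧ (i % 3 = 2 → P i < 0) := by
    intro i
    induction i with
    | zero => intro _; exact ⟨fun _ => hP0, fun h => by omega, fun h => by omega⟩
    | succ k ih =>
      intro hk
      have hklt : k < n := by omega
      obtain ⟨f0, f1, f2⟩ := ih (by omega)
      have hf := (hstep k hklt).2 (by rw [hJzero (k+1) hk, hJzero k (by omega)])
      have h3 : k % 3 = 0 ∨ k % 3 = 1 ∨ k % 3 = 2 := by omega
      rcases h3 with h3|h3|h3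
      · exact ⟨fun h => by omega, fun _ => hf.1 (f0 h3), fun h => by omega⟩
      · exact ⟨fun h => by omega, fun h => by omega, fun _ => hf.2.1 (f1 h3)⟩
      · exact ⟨fun _ => hf.2.2 (f2 h3), fun h => by omega, fun h => by omega⟩
  -- conclude
  intro i h1 h2
  have hi1 : i - 1 + 1 = i := by omega
  have hπi : π (i - 1) = P i - P (i - 1) := by
    have := hPsucc (i - 1)
    rw [hi1] at this
    linarith
  obtain ⟨g0, g1, g2⟩ := hpat (i - 1) (by omega)
  obtain ⟨k0, k1, k2⟩ := hpat i h2
  have hPi0 : i % 3 = 0 → ∑ j ∈ Finset.range i, π j = 0 := by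
    intro h; have := k0 h; simpa [hPdef] using this
  have h3 : i % 3 = 0 ∨ i % 3 = 1 ∨ i % 3 = 2 := by omega
  rcases h3 with h3|h3|h3
  · have hprev : (i - 1) % 3 = 2 := by omega
    have := g2 hprev
    have := k0 h3
    refine ⟨⟨fun _ => Or.inl h3, fun _ => by rw [hπi]; linarith⟩,
      ⟨fun hneg => absurd hneg (by rw [hπi]; linarith), fun h => by omega⟩, hPi0⟩
  · have hprev : (i - 1) % 3 = 0 := by omega
    have := g0 hprev
    have := k1 h3
    refine ⟨⟨fun _ => Or.inr h3, fun _ => by rw [hπi]; linarith⟩,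
      ⟨fun hneg => absurd hneg (by rw [hπi]; linarith), fun h => by omega⟩,
      fun h => by omega⟩
  · have hprev : (i - 1) % 3 = 1 := by omega
    have := g1 hprev
    have := k2 h3
    refine ⟨⟨fun hpos => absurd hpos (by rw [hπi]; linarith), fun h => by omega⟩,
      ⟨fun _ => h3, fun _ => by rw [hπi]; linarith⟩,
      fun h => by omega⟩
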